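/- arXiv:2106.14837 — 4 statements merged into one kernel-verified Lean document; each statement's English description precedes it below -/
import Mathlib

section
/- Let n ≥ 2, let Γ ⊂ ℝⁿ be an open convex cone with vertex at the origin, symmetric under permutations of coordinates, containing the positive cone Γ_n, with ∂Γ ≠ ∅, and let f : Γ → ℝ be a C¹ concave function such that f_i(λ) := ∂f/∂λ_i(λ) > 0 for every λ ∈ Γ and every 1 ≤ i ≤ n. Then the following two statements are equivalent: (a) for every σ < sup_Γ f and every λ ∈ Γ there exists T > 0 such that f(tλ) > σ for all t ≥ T; (b) for all λ, μ ∈ Γ one has ∑_{i=1}^n f_i(λ) μ_i > 0. -/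
/-!
By concavity, `f` lies below each of its tangent planes: `f z ≤ f x + Df(x)(z - x)`.

If `Df(x)μ > 0` throughout `Γ`, then for `y ∈ Γ` and large `t` the point `w = t x - y` lies in
the open cone `Γ`, and the tangent plane at `t x` gives `f (t x) ≥ f y + Df(t x) w > f y`.

Conversely, suppose `Df(x)μ ≤ 0`. The tangent plane at `x` bounds `f (t x)` by
`f x + (t - 1) Df(x)x`, so the ray condition forces `Df(x)x ≥ 0`; it then bounds `f (t μ)` by
`f x` for every `t > 0`, whereas `f (x + 1) > f x` because the partial derivatives are positive.
-/

open Filter Topology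

theorem exists_pos_forall_ge_iff_eventually_atTop {p : ℝ → Prop} :
    (∃ T > 0, ∀ t ≥ T, p t) ↔ ∀ᶠ t in atTop, p t := by
  refine ⟨fun ⟨T, _, hT⟩ => eventually_atTop.2 ⟨T, hT⟩, fun h => ?_⟩
  obtain ⟨T, hT⟩ := eventually_atTop.1 h
  exact ⟨max T 1, by positivity, fun t ht => hT t (le_of_max_le_left ht)⟩

theorem ContinuousLinearMap.sum_apply_single_mul {ι : Type*} [Fintype ι] [DecidableEq ι]
    (L : (ι → ℝ) →L[ℝ] ℝ) (μ : ι → ℝ) : ∑ i, L (Pi.single i 1) * μ i = L μ := by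
  conv_rhs => rw [← Finset.univ_sum_single μ, map_sum]
  refine Finset.sum_congr rfl fun i _ => ?_
  rw [mul_comm, ← smul_eq_mul, ← map_smul, ← Pi.single_smul', smul_eq_mul, mul_one]

section ConcaveCone

variable {E : Type*} [NormedAddCommGroup E] [NormedSpace ℝ E] {Γ : Set E} {f : E → ℝ}
  {f' : E →L[ℝ] ℝ} {x y μ : E}

theorem Convex.add_mem_of_smul_mem (hconv : Convex ℝ Γ)
    (hcone : ∀ x ∈ Γ, ∀ t : ℝ, 0 < t → t • x ∈ Γ) (hx : x ∈ Γ) (hy : y ∈ Γ) : x + y ∈ Γ := by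
  have hmid : (1 / 2 : ℝ) • x + (1 / 2 : ℝ) • y ∈ Γ :=
    hconv hx hy (by norm_num) (by norm_num) (by norm_num)
  convert hcone _ hmid 2 two_pos using 1
  module

theorem IsOpen.eventually_smul_sub_mem (hopen : IsOpen Γ)
    (hcone : ∀ x ∈ Γ, ∀ t : ℝ, 0 < t → t • x ∈ Γ) (hx : x ∈ Γ) (y : E) :
    ∀ᶠ t : ℝ in atTop, t • x - y ∈ Γ := by
  have hlim : Tendsto (fun t : ℝ => x - t⁻¹ • y) atTop (𝓝 x) := by
    simpa using tendsto_const_nhds.sub ((tendsto_inv_atTop_zero (𝕜 := ℝ)).smul_const y)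
  filter_upwards [hlim.eventually (hopen.mem_nhds hx), eventually_gt_atTop (0 : ℝ)]
    with t ht htpos
  convert hcone _ ht t htpos using 1
  rw [smul_sub, smul_smul, mul_inv_cancel₀ htpos.ne', one_smul]

theorem ConcaveOn.le_add_of_hasFDerivAt (hf : ConcaveOn ℝ Γ f) (hx : x ∈ Γ) (hy : y ∈ Γ)
    (hd : HasFDerivAt f f' x) : f y ≤ f x + f' (y - x) := by
  set g : ℝ →ᵃ[ℝ] E := AffineMap.lineMap x y
  have hg : HasDerivAt (f ∘ g) (f' (y - x)) 0 := by
    refine HasFDerivAt.comp_hasDerivAt _ ?_ AffineMap.hasDerivAt_lineMap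
    simpa [g] using hd
  have h0 : (0 : ℝ) ∈ g ⁻¹' Γ := by simpa [g] using hx
  have h1 : (1 : ℝ) ∈ g ⁻¹' Γ := by simpa [g] using hy
  have hslope := (hf.comp_affineMap g).slope_le_of_hasDerivAt h0 h1 one_pos hg
  simp only [slope_def_field, Function.comp_apply, AffineMap.lineMap_apply_one,
    AffineMap.lineMap_apply_zero, sub_zero, div_one, g] at hslope
  linarith

theorem ConcaveOn.add_le_of_hasFDerivAt (hf : ConcaveOn ℝ Γ f) (hx : x ∈ Γ) (hy : y ∈ Γ)
    (hd : HasFDerivAt f f' y) : f x + f' (y - x) ≤ f y := by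
  have htangent := hf.le_add_of_hasFDerivAt hy hx hd
  rw [← neg_sub, map_neg] at htangent
  linarith

theorem ConcaveOn.lt_add_of_fderiv_pos (hf : ConcaveOn ℝ Γ f)
    (hcone : ∀ x ∈ Γ, ∀ t : ℝ, 0 < t → t • x ∈ Γ) (hd : ∀ x ∈ Γ, DifferentiableAt ℝ f x)
    (hx : x ∈ Γ) (hy : y ∈ Γ) (hpos : ∀ z ∈ Γ, 0 < fderiv ℝ f z y) : f x < f (x + y) := by
  have hxy := hf.1.add_mem_of_smul_mem hcone hx hy
  have htangent := hf.add_le_of_hasFDerivAt hx hxy (hd _ hxy).hasFDerivAt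
  rw [add_sub_cancel_left] at htangent
  linarith [hpos _ hxy]

theorem ConcaveOn.eventually_lt_apply_smul_of_fderiv_pos (hf : ConcaveOn ℝ Γ f)
    (hopen : IsOpen Γ) (hcone : ∀ x ∈ Γ, ∀ t : ℝ, 0 < t → t • x ∈ Γ)
    (hd : ∀ x ∈ Γ, DifferentiableAt ℝ f x) (hpos : ∀ x ∈ Γ, ∀ μ ∈ Γ, 0 < fderiv ℝ f x μ)
    (hx : x ∈ Γ) (hy : y ∈ Γ) : ∀ᶠ t : ℝ in atTop, f y < f (t • x) := by
  filter_upwards [hopen.eventually_smul_sub_mem hcone hx y, eventually_gt_atTop 0] with t hw ht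
  have htx := hcone x hx t ht
  have htangent := hf.add_le_of_hasFDerivAt hy htx (hd _ htx).hasFDerivAt
  linarith [hpos _ htx _ hw]

theorem ConcaveOn.fderiv_apply_self_nonneg (hf : ConcaveOn ℝ Γ f)
    (hcone : ∀ x ∈ Γ, ∀ t : ℝ, 0 < t → t • x ∈ Γ) (hd : ∀ x ∈ Γ, DifferentiableAt ℝ f x)
    (hx : x ∈ Γ) (hray : ∀ᶠ t : ℝ in atTop, f x - 1 < f (t • x)) : 0 ≤ fderiv ℝ f x x := by
  by_contra! hneg
  have hbound (t : ℝ) (ht : 0 < t) : f (t • x) ≤ f x + (t - 1) * fderiv ℝ f x x := by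
    have htangent := hf.le_add_of_hasFDerivAt hx (hcone x hx t ht) (hd x hx).hasFDerivAt
    rwa [show t • x - x = (t - 1) • x by module, map_smul, smul_eq_mul] at htangent
  have hlim : Tendsto (fun t : ℝ => f x + (t - 1) * fderiv ℝ f x x) atTop atBot :=
    tendsto_atBot_add_const_left _ _
      ((tendsto_atTop_add_const_right _ (-1) tendsto_id).atTop_mul_const_of_neg hneg)
  obtain ⟨t, hlow, hhigh, ht⟩ :=
    (hray.and ((hlim.eventually_lt_atBot (f x - 1)).and (eventually_gt_atTop 0))).exists
  linarith [hbound t ht]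

theorem ConcaveOn.fderiv_pos_of_eventually_lt_apply_smul (hf : ConcaveOn ℝ Γ f)
    (hcone : ∀ x ∈ Γ, ∀ t : ℝ, 0 < t → t • x ∈ Γ) (hd : ∀ x ∈ Γ, DifferentiableAt ℝ f x)
    (hnomax : ∀ x ∈ Γ, ∃ y ∈ Γ, f x < f y)
    (hray : ∀ σ : ℝ, (∃ y ∈ Γ, σ < f y) → ∀ x ∈ Γ, ∀ᶠ t : ℝ in atTop, σ < f (t • x))
    (hx : x ∈ Γ) (hμ : μ ∈ Γ) : 0 < fderiv ℝ f x μ := by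
  by_contra! hle
  have hself := hf.fderiv_apply_self_nonneg hcone hd hx (hray _ ⟨x, hx, by linarith⟩ x hx)
  have hbound (t : ℝ) (ht : 0 < t) : f (t • μ) ≤ f x := by
    have htangent := hf.le_add_of_hasFDerivAt hx (hcone μ hμ t ht) (hd x hx).hasFDerivAt
    rw [map_sub, map_smul, smul_eq_mul] at htangent
    nlinarith
  obtain ⟨t, hlt, ht⟩ := ((hray (f x) (hnomax x hx) μ hμ).and (eventually_gt_atTop 0)).exists
  linarith [hbound t ht]

end ConcaveCone

theorem stmt_0_general (n : ℕ) (hn : 2 ≤ n) (Γ : Set (Fin n → ℝ)) (f : (Fin n → ℝ) → ℝ)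
    (hΓopen : IsOpen Γ)
    (hΓcone : ∀ x ∈ Γ, ∀ t : ℝ, 0 < t → t • x ∈ Γ)
    (hΓpos : {x : Fin n → ℝ | ∀ i, 0 < x i} ⊆ Γ)
    (hC1 : ContDiffOn ℝ 1 f Γ)
    (hconc : ConcaveOn ℝ Γ f)
    (hfi : ∀ x ∈ Γ, ∀ i : Fin n, 0 < fderiv ℝ f x (Pi.single i 1)) :
    (∀ σ : ℝ, (∃ y ∈ Γ, σ < f y) → ∀ x ∈ Γ, ∃ T > (0 : ℝ), ∀ t ≥ T, σ < f (t • x)) ↔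
      (∀ x ∈ Γ, ∀ μ ∈ Γ, 0 < ∑ i : Fin n, fderiv ℝ f x (Pi.single i 1) * μ i) := by
  have : Nonempty (Fin n) := ⟨⟨0, by omega⟩⟩
  have hd : ∀ x ∈ Γ, DifferentiableAt ℝ f x := fun x hx =>
    (hC1.differentiableOn one_ne_zero x hx).differentiableAt (hΓopen.mem_nhds hx)
  have hone : (1 : Fin n → ℝ) ∈ Γ := hΓpos fun _ => one_pos
  have hnomax : ∀ x ∈ Γ, ∃ y ∈ Γ, f x < f y := fun x hx =>
    ⟨x + 1, hconc.1.add_mem_of_smul_mem hΓcone hx hone,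
      hconc.lt_add_of_fderiv_pos hΓcone hd hx hone fun z hz => by
        rw [← ContinuousLinearMap.sum_apply_single_mul]
        simpa using Finset.sum_pos (fun i _ => hfi z hz i) Finset.univ_nonempty⟩
  simp only [exists_pos_forall_ge_iff_eventually_atTop, ContinuousLinearMap.sum_apply_single_mul]
  exact ⟨fun hray x hx μ hμ =>
      hconc.fderiv_pos_of_eventually_lt_apply_smul hΓcone hd hnomax hray hx hμ,
    fun hpos σ ⟨y, hy, hσ⟩ x hx =>
      (hconc.eventually_lt_apply_smul_of_fderiv_pos hΓopen hΓcone hd hpos hx hy).mono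
        fun t ht => hσ.trans ht⟩

/-- Lemma on characterization of concave functions satisfying the
structural condition. Let `n ≥ 2`, let `Γ ⊂ ℝⁿ` be an open convex symmetric cone with
vertex at the origin containing the positive cone, with nonempty boundary, and let
`f` be a `C¹` concave function on `Γ` with positive partial derivatives. Then the
condition "for every `σ < sup_Γ f` and every `λ ∈ Γ`, `f(tλ) > σ` for all large `t`"
is equivalent to "`∑ i, f_i(λ) μ_i > 0` for all `λ, μ ∈ Γ`". -/
theorem stmt_0 (n : ℕ) (hn : 2 ≤ n) (Γ : Set (Fin n → ℝ)) (f : (Fin n → ℝ) → ℝ)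
    (hΓopen : IsOpen Γ) (hΓconv : Convex ℝ Γ)
    (hΓcone : ∀ x ∈ Γ, ∀ t : ℝ, 0 < t → t • x ∈ Γ)
    (hΓsym : ∀ σ : Equiv.Perm (Fin n), ∀ x ∈ Γ, x ∘ σ ∈ Γ)
    (hΓpos : {x : Fin n → ℝ | ∀ i, 0 < x i} ⊆ Γ)
    (hΓbd : (frontier Γ).Nonempty)
    (hC1 : ContDiffOn ℝ 1 f Γ)
    (hconc : ConcaveOn ℝ Γ f)
    (hfi : ∀ x ∈ Γ, ∀ i : Fin n, 0 < fderiv ℝ f x (Pi.single i 1)) :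
    (∀ σ : ℝ, (∃ y ∈ Γ, σ < f y) → ∀ x ∈ Γ, ∃ T > (0 : ℝ), ∀ t ≥ T, σ < f (t • x)) ↔
      (∀ x ∈ Γ, ∀ μ ∈ Γ, 0 < ∑ i : Fin n, fderiv ℝ f x (Pi.single i 1) * μ i) :=
  stmt_0_general n hn Γ f hΓopen hΓcone hΓpos hC1 hconc hfi
end

section
/- Let n ≥ 2 and ε > 0. Given real numbers d_1,…,d_{n−1}, complex numbers a_1,…,a_{n−1}, and a real parameter 𝐚, let A be the n×n Hermitian arrow matrix determined by these data. If 𝐚 ≥ ((2n−3)/ε) ∑_{i=1}^{n−1} |a_i|² + (n−1) ∑_{i=1}^{n−1} |d_i| + (n−2)ε/(2n−3), then the eigenvalues of A (listed with multiplicity) admit an enumeration λ_1, …, λ_n such that |d_α − λ_α| < ε for every 1 ≤ α ≤ n−1, and 0 ≤ λ_n − 𝐚 < (n−1)ε. -/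
/-!
Sort the eigenvalues `λ₍₀₎ ≤ … ≤ λ₍ₘ₎` of `A` and the diagonal entries `d₍₀₎ ≤ … ≤ d₍ₘ₋₁₎`.
By the min-max principle, if the quadratic form of `A` is `< x ‖w‖²` (resp. `> x ‖w‖²`) on an
`r`-dimensional subspace, then at least `r` eigenvalues lie below (resp. above) `x`.
On the coordinates `i` with `d i < x` the form is diagonal, which gives the interlacing
`λ₍ₖ₎ ≤ d₍ₖ₎`. On the span of the coordinates `i` with `d i ≥ d₍ₖ₎` and of the last one, the
form exceeds `(d₍ₖ₎ - ε) ‖w‖²`: AM-GM bounds the off-diagonal terms,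
`2 |w_i a_i w_n| ≤ ε |w_i|² + |a_i|² |w_n|² / ε`, and the growth condition gives
`𝐚 ≥ d i + ∑ |a i|² / ε`. Hence `d₍ₖ₎ - ε < λ₍ₖ₎`. Finally, the trace identity
`∑ λ = ∑ d + 𝐚` gives `λ₍ₘ₎ - 𝐚 = ∑ₖ (d₍ₖ₎ - λ₍ₖ₎) ∈ [0, m ε)`.
-/

/-- The `(m+1) × (m+1)` Hermitian "arrow" matrix with diagonal entries
`d 0, …, d (m-1), 𝐚`, last column `a 0, …, a (m-1)` above the corner, last row the
conjugates, and all other off-diagonal entries `0`. -/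
def arrowMatrix (m : ℕ) (d : Fin m → ℝ) (a : Fin m → ℂ) (aa : ℝ) :
    Matrix (Fin (m + 1)) (Fin (m + 1)) ℂ :=
  Matrix.of fun i j =>
    if hi : i = Fin.last m then
      if hj : j = Fin.last m then (aa : ℂ) else (starRingEnd ℂ) (a (j.castPred hj))
    else
      if hj : j = Fin.last m then a (i.castPred hi)
      else if i = j then (d (i.castPred hi) : ℂ) else 0

open Finset Matrix
open scoped InnerProductSpace

namespace Tuple

variable {α : Type*} [LinearOrder α] {K : ℕ} (g : Fin K → α)

theorem card_filter_comp_sort (p : α → Prop) [DecidablePred p] :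
    #{j | p (g (sort g j))} = #{j | p (g j)} :=
  card_equiv (sort g) (by simp)

theorem lt_card_filter_lt_iff (k : Fin K) (c : α) :
    k < #{j | g j < c} ↔ g (sort g k) < c := by
  rw [← card_filter_comp_sort g (· < c)]
  have hg := monotone_sort g
  constructor
  · intro hk
    by_contra! hc
    have : #{j | g (sort g j) < c} ≤ #(Iio k) :=
      card_le_card fun j hj => mem_Iio.2 <| by
        by_contra! hkj
        exact (mem_filter.1 hj).2.not_ge (hc.trans (hg hkj))
    rw [Fin.card_Iio] at this
    omega
  · intro hc
    have : #(Iic k) ≤ #{j | g (sort g j) < c} :=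
      card_le_card fun j hj => mem_filter.2 ⟨mem_univ _, (hg (mem_Iic.1 hj)).trans_lt hc⟩
    rw [Fin.card_Iic] at this
    omega

theorem lt_of_le_card_filter_lt_add {k : Fin K} {c : α} (hk : K ≤ #{j | c < g j} + k) :
    c < g (sort g k) := by
  rw [← card_filter_comp_sort g (c < ·)] at hk
  by_contra! hc
  have : #{j | c < g (sort g j)} ≤ #(Ioi k) :=
    card_le_card fun j hj => mem_Ioi.2 <| by
      by_contra! hjk
      exact (mem_filter.1 hj).2.not_ge ((monotone_sort g hjk).trans hc)
  rw [Fin.card_Ioi] at this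
  omega

end Tuple

section WeightedSums

variable {ι E : Type*} [NormedAddCommGroup E] {s : Finset ι} {f g : ι → ℝ} {x : ι → E}

theorem sum_mul_norm_sq_le_sum_mul_norm_sq (h : ∀ i ∈ s, x i ≠ 0 → f i ≤ g i) :
    ∑ i ∈ s, f i * ‖x i‖ ^ 2 ≤ ∑ i ∈ s, g i * ‖x i‖ ^ 2 := by
  refine sum_le_sum fun i hi => ?_
  by_cases hxi : x i = 0
  · simp [hxi]
  · exact mul_le_mul_of_nonneg_right (h i hi hxi) (by positivity)

theorem sum_mul_norm_sq_lt_sum_mul_norm_sq (h : ∀ i ∈ s, x i ≠ 0 → f i < g i)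
    (hx : ∃ i ∈ s, x i ≠ 0) : ∑ i ∈ s, f i * ‖x i‖ ^ 2 < ∑ i ∈ s, g i * ‖x i‖ ^ 2 := by
  obtain ⟨i, hi, hxi⟩ := hx
  refine sum_lt_sum (fun j hj => ?_) ⟨i, hi, ?_⟩
  · by_cases hxj : x j = 0
    · simp [hxj]
    · exact mul_le_mul_of_nonneg_right (h j hj hxj).le (by positivity)
  · exact mul_lt_mul_of_pos_right (h i hi hxi) (by positivity)

end WeightedSums

theorem Complex.neg_le_two_mul_re_conj_mul_mul {ε : ℝ} (hε : 0 < ε) (x a y : ℂ) :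
    -(ε * ‖x‖ ^ 2 + ‖a‖ ^ 2 / ε * ‖y‖ ^ 2) ≤ 2 * (starRingEnd ℂ x * a * y).re := by
  have hre : -(‖x‖ * ‖a‖ * ‖y‖) ≤ (starRingEnd ℂ x * a * y).re := by
    simpa using (abs_le.1 (abs_re_le_norm (starRingEnd ℂ x * a * y))).1
  have hsq : 0 ≤ (ε * ‖x‖ - ‖a‖ * ‖y‖) ^ 2 / ε := by positivity
  have hexp : (ε * ‖x‖ - ‖a‖ * ‖y‖) ^ 2 / ε =
      ε * ‖x‖ ^ 2 + ‖a‖ ^ 2 / ε * ‖y‖ ^ 2 - 2 * (‖x‖ * ‖a‖ * ‖y‖) := by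
    field_simp
    ring
  linarith

namespace OrthonormalBasis

variable {𝕜 E ι : Type*} [RCLike 𝕜] [NormedAddCommGroup E] [InnerProductSpace 𝕜 E]
  [Fintype ι] (b : OrthonormalBasis ι 𝕜 E)

theorem repr_eq_zero_of_mem_span_image {s : Set ι} {v : E}
    (hv : v ∈ Submodule.span 𝕜 (b '' s)) {i : ι} (hi : i ∉ s) : b.repr v i = 0 := by
  have : Submodule.span 𝕜 (b '' s) ≤ LinearMap.ker (innerₛₗ 𝕜 (b i)) := by
    refine Submodule.span_le.2 ?_
    rintro _ ⟨j, hj, rfl⟩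
    exact b.orthonormal.inner_eq_zero (ne_of_mem_of_not_mem hj hi).symm
  simpa [b.repr_apply_apply] using this hv

theorem finrank_span_image (s : Finset ι) :
    Module.finrank 𝕜 (Submodule.span 𝕜 (b '' s)) = #s := by
  rw [Set.image_eq_range, ← Fintype.card_coe s]
  exact finrank_span_eq_card (b.orthonormal.linearIndependent.comp _ Subtype.val_injective)

theorem norm_sq_eq_sum_repr (v : E) : ‖v‖ ^ 2 = ∑ i, ‖b.repr v i‖ ^ 2 := by
  rw [← b.repr.norm_map, EuclideanSpace.norm_sq_eq]

variable {T : E →ₗ[𝕜] E} {μ : ι → ℝ}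

theorem re_inner_map_self_eq_sum (hb : ∀ i, T (b i) = (μ i : 𝕜) • b i) (v : E) :
    RCLike.re ⟪T v, v⟫_𝕜 = ∑ i, μ i * ‖b.repr v i‖ ^ 2 := by
  nth_rw 1 [← b.sum_repr v]
  simp only [map_sum, map_smul, hb, smul_smul, sum_inner, inner_smul_left, ← b.repr_apply_apply,
    map_mul, RCLike.conj_ofReal]
  refine sum_congr rfl fun i _ => ?_
  rw [mul_comm, ← mul_assoc, RCLike.mul_conj, ← RCLike.ofReal_pow, ← RCLike.ofReal_mul,
    RCLike.ofReal_re, mul_comm]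

theorem re_inner_map_self_le_of_mem_span (hb : ∀ i, T (b i) = (μ i : 𝕜) • b i) {c : ℝ}
    {v : E} (hv : v ∈ Submodule.span 𝕜 (b '' {i | μ i ≤ c})) :
    RCLike.re ⟪T v, v⟫_𝕜 ≤ c * ‖v‖ ^ 2 := by
  rw [b.re_inner_map_self_eq_sum hb, b.norm_sq_eq_sum_repr, mul_sum]
  refine sum_le_sum fun i _ => ?_
  by_cases hi : μ i ≤ c
  · exact mul_le_mul_of_nonneg_right hi (by positivity)
  · simp [b.repr_eq_zero_of_mem_span_image hv hi]

theorem finrank_le_card_filter_lt_of_lt_re_inner (hb : ∀ i, T (b i) = (μ i : 𝕜) • b i)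
    {c : ℝ} {W : Submodule 𝕜 E}
    (hW : ∀ w ∈ W, w ≠ 0 → c * ‖w‖ ^ 2 < RCLike.re ⟪T w, w⟫_𝕜) :
    Module.finrank 𝕜 W ≤ #{i | c < μ i} := by
  classical
  have := Module.Finite.of_basis b.toBasis
  let V := Submodule.span 𝕜 (b '' ({i | μ i ≤ c} : Finset ι))
  have hdisj : Disjoint W V := by
    refine Submodule.disjoint_def.2 fun w hwW hwV => ?_
    by_contra hw
    have := b.re_inner_map_self_le_of_mem_span hb (c := c) (by simpa [V] using hwV)
    linarith [hW w hwW hw]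
  have hdim := Submodule.finrank_add_finrank_le_of_disjoint hdisj
  rw [b.finrank_span_image, Module.finrank_eq_card_basis b.toBasis] at hdim
  have hsplit := card_filter_add_card_filter_not (s := univ) (fun i => c < μ i)
  simp only [not_lt, card_univ] at hsplit
  omega

theorem finrank_le_card_filter_lt_of_re_inner_lt (hb : ∀ i, T (b i) = (μ i : 𝕜) • b i)
    {c : ℝ} {W : Submodule 𝕜 E}
    (hW : ∀ w ∈ W, w ≠ 0 → RCLike.re ⟪T w, w⟫_𝕜 < c * ‖w‖ ^ 2) :
    Module.finrank 𝕜 W ≤ #{i | μ i < c} := by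
  have hb' : ∀ i, (-T) (b i) = ((-μ i : ℝ) : 𝕜) • b i := by simp [hb]
  simpa using b.finrank_le_card_filter_lt_of_lt_re_inner hb' (c := -c) fun w hw hw0 => by
    simpa using hW w hw hw0

end OrthonormalBasis

theorem Matrix.IsHermitian.toEuclideanLin_eigenvectorBasis {𝕜 n : Type*} [RCLike 𝕜]
    [Fintype n] [DecidableEq n] {A : Matrix n n 𝕜} (hA : A.IsHermitian) (j : n) :
    toEuclideanLin A (hA.eigenvectorBasis j) = (hA.eigenvalues j : 𝕜) • hA.eigenvectorBasis j := by
  rw [toLpLin_apply, hA.mulVec_eigenvectorBasis, RCLike.real_smul_eq_coe_smul (K := 𝕜)]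
  rfl

namespace EuclideanSpace

variable {𝕜 : Type*} [RCLike 𝕜]

theorem apply_eq_zero_of_mem_span_basisFun_image {ι : Type*} [Fintype ι] {s : Set ι}
    {w : EuclideanSpace 𝕜 ι} (hw : w ∈ Submodule.span 𝕜 (basisFun ι 𝕜 '' s)) {i : ι}
    (hi : i ∉ s) : w i = 0 :=
  (basisFun ι 𝕜).repr_eq_zero_of_mem_span_image hw hi

theorem exists_castSucc_ne_zero {K : ℕ} {w : EuclideanSpace 𝕜 (Fin (K + 1))}
    (hlast : w (Fin.last K) = 0) (hw : w ≠ 0) : ∃ i : Fin K, w i.castSucc ≠ 0 := by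
  by_contra! h
  refine hw (PiLp.ext fun j => ?_)
  induction j using Fin.lastCases <;> simp_all

end EuclideanSpace

section ArrowMatrix

variable {m : ℕ} (d : Fin m → ℝ) (a : Fin m → ℂ) (aa : ℝ)

theorem arrowMatrix_mulVec_castSucc (w : Fin (m + 1) → ℂ) (i : Fin m) :
    (arrowMatrix m d a aa *ᵥ w) i.castSucc = d i * w i.castSucc + a i * w (Fin.last m) := by
  simp [arrowMatrix, mulVec, dotProduct, Fin.sum_univ_castSucc, Fin.castSucc_ne_last, ite_mul]

theorem arrowMatrix_mulVec_last (w : Fin (m + 1) → ℂ) :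
    (arrowMatrix m d a aa *ᵥ w) (Fin.last m) =
      ∑ i, starRingEnd ℂ (a i) * w i.castSucc + aa * w (Fin.last m) := by
  simp [arrowMatrix, mulVec, dotProduct, Fin.sum_univ_castSucc, Fin.castSucc_ne_last]

theorem trace_arrowMatrix : (arrowMatrix m d a aa).trace = ((∑ i, d i + aa : ℝ) : ℂ) := by
  simp [arrowMatrix, trace, Fin.sum_univ_castSucc, Fin.castSucc_ne_last]

theorem re_inner_toEuclideanLin_arrowMatrix (w : EuclideanSpace ℂ (Fin (m + 1))) :
    RCLike.re ⟪toEuclideanLin (arrowMatrix m d a aa) w, w⟫_ℂ =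
      ∑ i, (d i * ‖w i.castSucc‖ ^ 2 +
          2 * (starRingEnd ℂ (w i.castSucc) * a i * w (Fin.last m)).re) +
        aa * ‖w (Fin.last m)‖ ^ 2 := by
  simp only [PiLp.inner_apply, toLpLin_apply, Fin.sum_univ_castSucc, RCLike.re_to_complex,
    Complex.add_re, Complex.re_sum, arrowMatrix_mulVec_castSucc, arrowMatrix_mulVec_last,
    inner_add_left, sum_inner]
  rw [← add_assoc, ← sum_add_distrib]
  simp only [RCLike.inner_apply, Complex.mul_re, Complex.mul_im, Complex.conj_re, Complex.conj_im,
    Complex.ofReal_re, Complex.ofReal_im, Complex.sq_norm, Complex.normSq_apply, map_mul]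
  congr 1
  · exact sum_congr rfl fun i _ => by ring
  · ring

variable {d a aa}

theorem re_inner_toEuclideanLin_arrowMatrix_of_last_eq_zero
    {w : EuclideanSpace ℂ (Fin (m + 1))} (hw : w (Fin.last m) = 0) :
    RCLike.re ⟪toEuclideanLin (arrowMatrix m d a aa) w, w⟫_ℂ =
      ∑ i, d i * ‖w i.castSucc‖ ^ 2 := by
  rw [re_inner_toEuclideanLin_arrowMatrix, hw]
  simp

theorem re_inner_toEuclideanLin_arrowMatrix_ge {ε : ℝ} (hε : 0 < ε)
    (w : EuclideanSpace ℂ (Fin (m + 1))) :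
    ∑ i, (d i - ε) * ‖w i.castSucc‖ ^ 2 +
        (aa - (∑ i, ‖a i‖ ^ 2) / ε) * ‖w (Fin.last m)‖ ^ 2 ≤
      RCLike.re ⟪toEuclideanLin (arrowMatrix m d a aa) w, w⟫_ℂ := by
  rw [re_inner_toEuclideanLin_arrowMatrix]
  calc ∑ i, (d i - ε) * ‖w i.castSucc‖ ^ 2 +
        (aa - (∑ i, ‖a i‖ ^ 2) / ε) * ‖w (Fin.last m)‖ ^ 2
      = ∑ i, (d i * ‖w i.castSucc‖ ^ 2 -
          (ε * ‖w i.castSucc‖ ^ 2 + ‖a i‖ ^ 2 / ε * ‖w (Fin.last m)‖ ^ 2)) +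
          aa * ‖w (Fin.last m)‖ ^ 2 := by
        simp only [sum_sub_distrib, sum_add_distrib, sum_div, sum_mul, sub_mul]
        ring
    _ ≤ _ := by
        gcongr with i
        linarith [Complex.neg_le_two_mul_re_conj_mul_mul hε (w i.castSucc) (a i) (w (Fin.last m))]

theorem re_inner_toEuclideanLin_arrowMatrix_lt {x : ℝ} {w : EuclideanSpace ℂ (Fin (m + 1))}
    (hlast : w (Fin.last m) = 0) (hw : ∀ i, w i.castSucc ≠ 0 → d i < x) (hw0 : w ≠ 0) :
    RCLike.re ⟪toEuclideanLin (arrowMatrix m d a aa) w, w⟫_ℂ < x * ‖w‖ ^ 2 := by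
  rw [re_inner_toEuclideanLin_arrowMatrix_of_last_eq_zero hlast, EuclideanSpace.norm_sq_eq,
    Fin.sum_univ_castSucc, hlast, norm_zero, zero_pow two_ne_zero, add_zero, mul_sum]
  exact sum_mul_norm_sq_lt_sum_mul_norm_sq (fun i _ => hw i)
    ((EuclideanSpace.exists_castSucc_ne_zero hlast hw0).imp fun i h => ⟨mem_univ i, h⟩)

theorem sub_mul_lt_re_inner_toEuclideanLin_arrowMatrix {ε t : ℝ} (hε : 0 < ε)
    (haa : t + (∑ i, ‖a i‖ ^ 2) / ε ≤ aa) {w : EuclideanSpace ℂ (Fin (m + 1))}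
    (hw : ∀ i, w i.castSucc ≠ 0 → t ≤ d i) (hw0 : w ≠ 0) :
    (t - ε) * ‖w‖ ^ 2 < RCLike.re ⟪toEuclideanLin (arrowMatrix m d a aa) w, w⟫_ℂ := by
  rw [EuclideanSpace.norm_sq_eq, Fin.sum_univ_castSucc, mul_add, mul_sum]
  by_cases hlast : w (Fin.last m) = 0
  · rw [re_inner_toEuclideanLin_arrowMatrix_of_last_eq_zero hlast, hlast, norm_zero,
      zero_pow two_ne_zero, mul_zero, add_zero]
    exact sum_mul_norm_sq_lt_sum_mul_norm_sq (fun i _ hi => by linarith [hw i hi])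
      ((EuclideanSpace.exists_castSucc_ne_zero hlast hw0).imp fun i h => ⟨mem_univ i, h⟩)
  · have hdiag :
        ∑ i : Fin m, (t - ε) * ‖w i.castSucc‖ ^ 2 ≤ ∑ i, (d i - ε) * ‖w i.castSucc‖ ^ 2 :=
      sum_mul_norm_sq_le_sum_mul_norm_sq fun i _ hi => by linarith [hw i hi]
    have hcorner : t * ‖w (Fin.last m)‖ ^ 2 ≤
        (aa - (∑ i, ‖a i‖ ^ 2) / ε) * ‖w (Fin.last m)‖ ^ 2 :=
      mul_le_mul_of_nonneg_right (by linarith) (by positivity)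
    have hpos : 0 < ε * ‖w (Fin.last m)‖ ^ 2 := by
      have := norm_pos_iff.2 hlast
      positivity
    linarith [re_inner_toEuclideanLin_arrowMatrix_ge (d := d) (a := a) (aa := aa) hε w]

end ArrowMatrix

namespace arrowMatrix

variable {m : ℕ} {d : Fin m → ℝ} {a : Fin m → ℂ} {aa : ℝ}
  (hA : (arrowMatrix m d a aa).IsHermitian)

theorem eigenvalues_sort_castSucc_le (k : Fin m) :
    hA.eigenvalues (Tuple.sort hA.eigenvalues k.castSucc) ≤ d (Tuple.sort d k) := by
  set x := hA.eigenvalues (Tuple.sort hA.eigenvalues k.castSucc)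
  by_contra! hdx
  let s : Finset (Fin (m + 1)) := ({i | d i < x} : Finset (Fin m)).map Fin.castSuccEmb
  have hcount : #s ≤ #{j | hA.eigenvalues j < x} := by
    rw [← (EuclideanSpace.basisFun _ ℂ).finrank_span_image s]
    refine hA.eigenvectorBasis.finrank_le_card_filter_lt_of_re_inner_lt
      hA.toEuclideanLin_eigenvectorBasis fun w hw hw0 => ?_
    have hvan : ∀ j ∉ s, w j = 0 := fun j hj =>
      EuclideanSpace.apply_eq_zero_of_mem_span_basisFun_image hw (by simpa using hj)
    refine re_inner_toEuclideanLin_arrowMatrix_lt (hvan _ ?_) (fun i hi => ?_) hw0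
    · simp [s, Fin.castSucc_ne_last]
    · by_contra h
      exact hi (hvan _ (by simp [s, h]))
  have hk := (Tuple.lt_card_filter_lt_iff d k x).2 hdx
  have : (k.castSucc : ℕ) < #{j | hA.eigenvalues j < x} := by
    simp only [s, card_map] at hcount
    simp only [Fin.val_castSucc]
    omega
  exact lt_irrefl x ((Tuple.lt_card_filter_lt_iff _ _ _).1 this)

theorem sub_lt_eigenvalues_sort_castSucc {ε : ℝ} (hε : 0 < ε)
    (haa : ∀ i, d i + (∑ i, ‖a i‖ ^ 2) / ε ≤ aa) (k : Fin m) :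
    d (Tuple.sort d k) - ε < hA.eigenvalues (Tuple.sort hA.eigenvalues k.castSucc) := by
  set t := d (Tuple.sort d k)
  let s : Finset (Fin (m + 1)) :=
    insert (Fin.last m) (({i | ¬d i < t} : Finset (Fin m)).map Fin.castSuccEmb)
  have hcount : #s ≤ #{j | t - ε < hA.eigenvalues j} := by
    rw [← (EuclideanSpace.basisFun _ ℂ).finrank_span_image s]
    refine hA.eigenvectorBasis.finrank_le_card_filter_lt_of_lt_re_inner
      hA.toEuclideanLin_eigenvectorBasis fun w hw hw0 => ?_
    refine sub_mul_lt_re_inner_toEuclideanLin_arrowMatrix hε (haa _) (fun i hi => ?_) hw0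
    by_contra h
    exact hi (EuclideanSpace.apply_eq_zero_of_mem_span_basisFun_image hw
      (by simpa [s, Fin.castSucc_ne_last] using not_le.1 h))
  have hk : #{i | d i < t} ≤ k :=
    not_lt.1 fun h => lt_irrefl t ((Tuple.lt_card_filter_lt_iff d k t).1 h)
  have hsplit := card_filter_add_card_filter_not (s := univ) (fun i => d i < t)
  rw [card_insert_of_notMem (by simp [Fin.castSucc_ne_last]), card_map] at hcount
  rw [card_univ, Fintype.card_fin] at hsplit
  exact Tuple.lt_of_le_card_filter_lt_add _ (by simp only [Fin.val_castSucc]; omega)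

theorem eigenvalues_sort_last_sub_eq_sum :
    hA.eigenvalues (Tuple.sort hA.eigenvalues (Fin.last m)) - aa =
      ∑ k, (d (Tuple.sort d k) - hA.eigenvalues (Tuple.sort hA.eigenvalues k.castSucc)) := by
  have htrace : ∑ j, hA.eigenvalues j = ∑ i, d i + aa := by
    have := hA.trace_eq_sum_eigenvalues
    rw [trace_arrowMatrix] at this
    exact Complex.ofReal_injective (by simpa using this.symm)
  rw [← Equiv.sum_comp (Tuple.sort hA.eigenvalues), Fin.sum_univ_castSucc] at htrace
  rw [sum_sub_distrib, Equiv.sum_comp (Tuple.sort d) d]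
  linarith

end arrowMatrix

theorem add_sum_norm_sq_div_le_of_growth {m : ℕ} (hm : 1 ≤ m) {ε : ℝ} (hε : 0 < ε)
    {d : Fin m → ℝ} {a : Fin m → ℂ} {aa : ℝ}
    (hgrowth : aa ≥ (2 * (m + 1 : ℝ) - 3) / ε * ∑ i : Fin m, ‖a i‖ ^ 2
        + ((m + 1 : ℝ) - 1) * ∑ i : Fin m, |d i|
        + ((m + 1 : ℝ) - 2) * ε / (2 * (m + 1 : ℝ) - 3)) (i : Fin m) :
    d i + (∑ i, ‖a i‖ ^ 2) / ε ≤ aa := by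
  have hm' : (1 : ℝ) ≤ m := by exact_mod_cast hm
  have hS : (∑ i, ‖a i‖ ^ 2) / ε ≤ (2 * (m + 1 : ℝ) - 3) / ε * ∑ i, ‖a i‖ ^ 2 := by
    rw [div_mul_eq_mul_div]
    gcongr
    nlinarith [sum_nonneg fun i (_ : i ∈ univ) => sq_nonneg ‖a i‖]
  have hd : d i ≤ ((m + 1 : ℝ) - 1) * ∑ i, |d i| :=
    calc d i ≤ ∑ i, |d i| :=
          (le_abs_self _).trans (single_le_sum (fun i _ => abs_nonneg (d i)) (mem_univ i))
      _ ≤ _ := le_mul_of_one_le_left (sum_nonneg fun i _ => abs_nonneg _) (by linarith)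
  have hrest : 0 ≤ ((m + 1 : ℝ) - 2) * ε / (2 * (m + 1 : ℝ) - 3) := by
    apply div_nonneg <;> nlinarith
  linarith

/-- quantitative lemma on eigenvalues of arrow matrices.
Writing `n = m + 1 ≥ 2`, if the corner entry `𝐚` satisfies the quadratic growth
condition `𝐚 ≥ ((2n−3)/ε) ∑ |a_i|² + (n−1) ∑ |d_i| + (n−2)ε/(2n−3)` then the
eigenvalues of the arrow matrix admit an enumeration `λ_1, …, λ_n` with
`|d_α − λ_α| < ε` for `α ≤ n−1` and `0 ≤ λ_n − 𝐚 < (n−1)ε`. -/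
theorem stmt_1 (m : ℕ) (hm : 1 ≤ m) (ε : ℝ) (hε : 0 < ε)
    (d : Fin m → ℝ) (a : Fin m → ℂ) (aa : ℝ)
    (hA : (arrowMatrix m d a aa).IsHermitian)
    (hgrowth : aa ≥ (2 * (m + 1 : ℝ) - 3) / ε * ∑ i : Fin m, ‖a i‖ ^ 2
        + ((m + 1 : ℝ) - 1) * ∑ i : Fin m, |d i|
        + ((m + 1 : ℝ) - 2) * ε / (2 * (m + 1 : ℝ) - 3)) :
    ∃ σ : Equiv.Perm (Fin (m + 1)),
      (∀ α : Fin m, |d α - hA.eigenvalues (σ α.castSucc)| < ε) ∧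
        0 ≤ hA.eigenvalues (σ (Fin.last m)) - aa ∧
          hA.eigenvalues (σ (Fin.last m)) - aa < ((m + 1 : ℝ) - 1) * ε := by
  have haa := add_sum_norm_sq_div_le_of_growth hm hε hgrowth
  let σ := (finSuccEquivLast.symm.permCongr (Equiv.optionCongr (Tuple.sort d))).symm.trans
    (Tuple.sort hA.eigenvalues)
  have hσ : ∀ k, σ (Tuple.sort d k).castSucc = Tuple.sort hA.eigenvalues k.castSucc := by
    simp [σ, Equiv.symm_apply_eq, Equiv.permCongr_apply]
  have hσ_last : σ (Fin.last m) = Tuple.sort hA.eigenvalues (Fin.last m) := by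
    simp [σ, Equiv.symm_apply_eq, Equiv.permCongr_apply]
  refine ⟨σ, fun α => ?_, ?_, ?_⟩
  · obtain ⟨k, rfl⟩ := (Tuple.sort d).surjective α
    rw [hσ, abs_lt]
    constructor <;> linarith [arrowMatrix.eigenvalues_sort_castSucc_le hA k,
      arrowMatrix.sub_lt_eigenvalues_sort_castSucc hA hε haa k]
  · rw [hσ_last, arrowMatrix.eigenvalues_sort_last_sub_eq_sum]
    exact sum_nonneg fun k _ => sub_nonneg.2 (arrowMatrix.eigenvalues_sort_castSucc_le hA k)
  · rw [hσ_last, arrowMatrix.eigenvalues_sort_last_sub_eq_sum]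
    calc _ < ∑ _k : Fin m, ε := sum_lt_sum_of_nonempty (univ_nonempty_iff.2 ⟨⟨0, hm⟩⟩)
          fun k _ => by linarith [arrowMatrix.sub_lt_eigenvalues_sort_castSucc hA hε haa k]
      _ = _ := by simp
end

section
/- Let ε > 0, let d_1 ∈ ℝ, a_1 ∈ ℂ, and 𝐚 ∈ ℝ, and let A be the 2×2 Hermitian matrix with entries A_{11} = d_1, A_{12} = a_1, A_{21} = conj(a_1), A_{22} = 𝐚. Let λ_1 ≤ λ_2 be the two (real) eigenvalues of A. If 𝐚 ≥ |a_1|²/ε + d_1, then 0 ≤ d_1 − λ_1 = λ_2 − 𝐚 < ε. -/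
/-!
Trace and determinant give `λ₁ + λ₂ = d₁ + 𝐚` and `λ₁ λ₂ = d₁ 𝐚 - |a₁|²`, so `s = d₁ - λ₁ = λ₂ - 𝐚`
satisfies `s (s + δ) = |a₁|²` with `δ = 𝐚 - d₁ ≥ |a₁|²/ε`. As `λ₁ ≤ λ₂` means `s + δ ≥ -s`, a
negative `s` would make `s (s + δ)` negative; and `s ≥ ε` would give `|a₁|² ≥ ε (ε + δ) > ε δ ≥ |a₁|²`.
-/

theorem mem_Ico_of_mul_add_eq {ε δ r s : ℝ} (hε : 0 < ε) (hr : 0 ≤ r) (hδ : r / ε ≤ δ)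
    (hs : -δ ≤ 2 * s) (hroot : s * (s + δ) = r) : s ∈ Set.Ico 0 ε := by
  have hrδ : r ≤ ε * δ := by rwa [div_le_iff₀' hε] at hδ
  have hδ0 : 0 ≤ δ := (div_nonneg hr hε.le).trans hδ
  exact ⟨by nlinarith, by nlinarith⟩

namespace Matrix.IsHermitian

variable {𝕜 : Type*} [RCLike 𝕜] {A : Matrix (Fin 2) (Fin 2) 𝕜} (hA : A.IsHermitian)
  (e : Equiv.Perm (Fin 2))

theorem eigenvalues_comp_add_fin_two :
    ((hA.eigenvalues ∘ e) 0 + (hA.eigenvalues ∘ e) 1 : 𝕜) = A 0 0 + A 1 1 := by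
  have := hA.trace_eq_sum_eigenvalues
  rw [← Equiv.sum_comp e] at this
  simpa [Fin.sum_univ_two, trace_fin_two] using this.symm

theorem eigenvalues_comp_mul_fin_two :
    ((hA.eigenvalues ∘ e) 0 * (hA.eigenvalues ∘ e) 1 : 𝕜) = A 0 0 * A 1 1 - A 0 1 * A 1 0 := by
  have := hA.det_eq_prod_eigenvalues
  rw [← Equiv.prod_comp e] at this
  simpa [Fin.prod_univ_two, det_fin_two] using this.symm

end Matrix.IsHermitian

/-- the `2 × 2` case of the quantitative lemma. For the Hermitian
matrix `A = !![d₁, a₁; conj a₁, 𝐚]` with eigenvalues `λ₁ ≤ λ₂`, if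
`𝐚 ≥ |a₁|²/ε + d₁` then `0 ≤ d₁ − λ₁ = λ₂ − 𝐚 < ε`. -/
theorem stmt_3 (ε : ℝ) (hε : 0 < ε) (d₁ : ℝ) (a₁ : ℂ) (aa : ℝ)
    (hA : (!![(d₁ : ℂ), a₁; (starRingEnd ℂ) a₁, (aa : ℂ)] :
      Matrix (Fin 2) (Fin 2) ℂ).IsHermitian)
    (lam : Fin 2 → ℝ) (e : Equiv.Perm (Fin 2))
    (hlam : lam = hA.eigenvalues ∘ e) (hmono : Monotone lam)
    (hgrowth : aa ≥ ‖a₁‖ ^ 2 / ε + d₁) :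
    0 ≤ d₁ - lam 0 ∧ d₁ - lam 0 = lam 1 - aa ∧ lam 1 - aa < ε := by
  have hsum : lam 0 + lam 1 = d₁ + aa := by
    have := hA.eigenvalues_comp_add_fin_two e
    rw [← hlam] at this
    simp only [Fin.isValue, Complex.coe_algebraMap, Matrix.of_apply, Matrix.cons_val',
      Matrix.cons_val_zero, Matrix.cons_val_fin_one, Matrix.cons_val_one] at this
    exact_mod_cast this
  have hprod : lam 0 * lam 1 = d₁ * aa - ‖a₁‖ ^ 2 := by
    have := hA.eigenvalues_comp_mul_fin_two e
    rw [← hlam] at this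
    simp only [Fin.isValue, Complex.coe_algebraMap, Matrix.of_apply, Matrix.cons_val',
      Matrix.cons_val_zero, Matrix.cons_val_fin_one, Matrix.cons_val_one, Complex.mul_conj,
      Complex.normSq_eq_norm_sq, Complex.ofReal_pow] at this
    exact_mod_cast this
  have hle : lam 0 ≤ lam 1 := hmono zero_le_one
  obtain ⟨hnonneg, hlt⟩ := mem_Ico_of_mul_add_eq (δ := aa - d₁) (s := d₁ - lam 0) hε
    (sq_nonneg ‖a₁‖) (by linarith) (by linarith) (by linear_combination -hprod + lam 0 * hsum)
  exact ⟨hnonneg, by linarith, by linarith⟩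
end

section
/- Let n ≥ 1, let Θ be an n×n complex Hermitian matrix with eigenvalues λ_1 ≤ λ_2 ≤ ⋯ ≤ λ_n listed with multiplicity in increasing order, let μ_1 ≥ μ_2 ≥ ⋯ ≥ μ_n be real numbers, and let T_1, …, T_n be an orthonormal basis of ℂⁿ with respect to the standard Hermitian inner product ⟨·,·⟩. Then ∑_{i=1}^n μ_i λ_i ≤ ∑_{i=1}^n μ_i ⟨Θ T_i, T_i⟩ (each ⟨Θ T_i, T_i⟩ being real since Θ is Hermitian). -/
/-!
Expanding `Tᵢ` in an orthonormal eigenbasis `v` of `Θ` gives `⟨Θ Tᵢ, Tᵢ⟩ = ∑ⱼ λⱼ |⟨vⱼ, Tᵢ⟩|²`, and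
the weights `|⟨vⱼ, Tᵢ⟩|²` are the squared moduli of the entries of a unitary matrix, hence form a
doubly stochastic matrix `D`. The right-hand side is then `∑ᵢ μᵢ (D λ)ᵢ`, which is linear in `D`;
by Birkhoff's theorem it suffices to treat permutation matrices, where it is the rearrangement
inequality for the oppositely ordered `μ` and `λ`.
-/

open Matrix

section Rearrangement

variable {R ι : Type*} [Field R] [LinearOrder R] [IsStrictOrderedRing R]
  [Fintype ι] [DecidableEq ι]

theorem Antivary.sum_mul_le_sum_mul_mulVec_of_mem_doublyStochastic {f g : ι → R}
    (hfg : Antivary f g) {M : Matrix ι ι R} (hM : M ∈ doublyStochastic R ι) :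
    ∑ i, f i * g i ≤ ∑ i, f i * (M *ᵥ g) i := by
  have hM : M ∈ (doublyStochastic R ι : Set (Matrix ι ι R)) := hM
  rw [doublyStochastic_eq_convexHull_permMatrix] at hM
  refine convexHull_min (t := {A | ∑ i, f i * g i ≤ ∑ i, f i * (A *ᵥ g) i}) ?_
    (convex_halfSpace_ge ⟨fun A B => ?_, fun c A => ?_⟩ _) hM
  · rintro _ ⟨σ, rfl⟩
    simpa only [Set.mem_ofPred_eq, permMatrix_mulVec, Function.comp_apply] using
      hfg.sum_mul_le_sum_mul_comp_perm
  · simp only [add_mulVec, Pi.add_apply, mul_add, Finset.sum_add_distrib]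
  · simp only [smul_mulVec, Pi.smul_apply, smul_eq_mul, Finset.mul_sum, mul_left_comm]

end Rearrangement

section Unitary

variable {𝕜 n : Type*} [RCLike 𝕜] [Fintype n] [DecidableEq n]

theorem Matrix.sum_norm_sq_row_eq_one_of_mem_unitaryGroup {U : Matrix n n 𝕜}
    (hU : U ∈ unitaryGroup n 𝕜) (i : n) : ∑ j, ‖U i j‖ ^ 2 = 1 := by
  have h := congr_fun (congr_fun (mem_unitaryGroup_iff.mp hU) i) i
  simp only [mul_apply, star_apply, RCLike.star_def, RCLike.mul_conj, one_apply_eq] at h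
  exact_mod_cast h

theorem Matrix.norm_sq_mem_doublyStochastic_of_mem_unitaryGroup {U : Matrix n n 𝕜}
    (hU : U ∈ unitaryGroup n 𝕜) : of (fun i j => ‖U i j‖ ^ 2) ∈ doublyStochastic ℝ n := by
  refine mem_doublyStochastic_iff_sum.mpr ⟨fun i j => sq_nonneg _,
    sum_norm_sq_row_eq_one_of_mem_unitaryGroup hU, fun j => ?_⟩
  simpa only [of_apply, star_apply, norm_star] using
    sum_norm_sq_row_eq_one_of_mem_unitaryGroup (Unitary.star_mem hU) j

theorem Matrix.IsHermitian.star_dotProduct_mulVec_eq_sum {A : Matrix n n 𝕜} (hA : A.IsHermitian)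
    (v : n → 𝕜) :
    star v ⬝ᵥ A *ᵥ v = ((∑ j, hA.eigenvalues j *
      ‖(star (hA.eigenvectorUnitary : Matrix n n 𝕜) *ᵥ v) j‖ ^ 2 : ℝ) : 𝕜) := by
  set U : Matrix n n 𝕜 := ↑hA.eigenvectorUnitary
  have hstar : star v ᵥ* U = star (star U *ᵥ v) := by
    rw [star_mulVec, star_eq_conjTranspose, conjTranspose_conjTranspose]
  conv_lhs => rw [hA.spectral_theorem, Unitary.conjStarAlgAut_apply]
  rw [← mulVec_mulVec, ← mulVec_mulVec, dotProduct_mulVec, hstar]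
  simp only [dotProduct, mulVec_diagonal, Pi.star_apply, Function.comp_apply, RCLike.ofReal_sum,
    RCLike.ofReal_mul, RCLike.ofReal_pow]
  refine Finset.sum_congr rfl fun j _ => ?_
  rw [mul_left_comm, RCLike.star_def, RCLike.conj_mul]

end Unitary

theorem stmt_4_general (n : ℕ) (Θ : Matrix (Fin n) (Fin n) ℂ)
    (hΘ : Θ.IsHermitian)
    (lam : Fin n → ℝ) (e : Equiv.Perm (Fin n))
    (hlam : lam = hΘ.eigenvalues ∘ e) (hmono : Monotone lam)
    (μ : Fin n → ℝ) (hμ : Antitone μ)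
    (T : Fin n → (Fin n → ℂ))
    (hT : ∀ i j : Fin n, star (T i) ⬝ᵥ T j = if i = j then 1 else 0) :
    ∑ i : Fin n, μ i * lam i ≤ ∑ i : Fin n, μ i * (star (T i) ⬝ᵥ Θ.mulVec (T i)).re := by
  set V : Matrix (Fin n) (Fin n) ℂ := ↑hΘ.eigenvectorUnitary
  have hTcol : (of T)ᵀ ∈ unitaryGroup (Fin n) ℂ := by
    refine mem_unitaryGroup_iff'.mpr (ext fun i j => ?_)
    simpa [mul_apply, one_apply, dotProduct] using hT i j
  set W := star V * (of T)ᵀ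
  have hW : W ∈ unitaryGroup (Fin n) ℂ :=
    mul_mem (Unitary.star_mem hΘ.eigenvectorUnitary.2) hTcol
  -- `D i k = |⟨v (e k), T i⟩|²`: the columns follow `e`, so that `D` acts on `lam`.
  set D := (of fun i j => ‖W i j‖ ^ 2)ᵀ.reindex (Equiv.refl _) e.symm
  have hD : D ∈ doublyStochastic ℝ (Fin n) := reindex_mem_doublyStochastic
    (transpose_mem_doublyStochastic_iff.mpr (norm_sq_mem_doublyStochastic_of_mem_unitaryGroup hW))
  have hform : ∀ i, (star (T i) ⬝ᵥ Θ *ᵥ T i).re = (D *ᵥ lam) i := by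
    intro i
    rw [hΘ.star_dotProduct_mulVec_eq_sum, ← RCLike.re_to_complex, RCLike.ofReal_re, hlam, mulVec,
      dotProduct, ← Equiv.sum_comp e]
    simp [D, W, V, mul_apply, mulVec, dotProduct, mul_comm]
  simp_rw [hform]
  exact (hμ.antivary hmono).sum_mul_le_sum_mul_mulVec_of_mem_doublyStochastic hD

/-- a weighted trace inequality, after Marcus / CNS Lemma 6.2.
Let `Θ` be an `n × n` Hermitian matrix with eigenvalues `λ_1 ≤ ⋯ ≤ λ_n` listed with
multiplicity in increasing order, let `μ_1 ≥ ⋯ ≥ μ_n` be reals, and let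
`T_1, …, T_n` be an orthonormal basis of `ℂⁿ` for the standard Hermitian inner
product. Then `∑ μ_i λ_i ≤ ∑ μ_i ⟨Θ T_i, T_i⟩`. -/
theorem stmt_4 (n : ℕ) (hn : 1 ≤ n) (Θ : Matrix (Fin n) (Fin n) ℂ)
    (hΘ : Θ.IsHermitian)
    (lam : Fin n → ℝ) (e : Equiv.Perm (Fin n))
    (hlam : lam = hΘ.eigenvalues ∘ e) (hmono : Monotone lam)
    (μ : Fin n → ℝ) (hμ : Antitone μ)
    (T : Fin n → (Fin n → ℂ))
    (hT : ∀ i j : Fin n, star (T i) ⬝ᵥ T j = if i = j then 1 else 0) :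
    ∑ i : Fin n, μ i * lam i ≤ ∑ i : Fin n, μ i * (star (T i) ⬝ᵥ Θ.mulVec (T i)).re :=
  stmt_4_general n Θ hΘ lam e hlam hmono μ hμ T hT
end
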